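/- arXiv:2107.02678 — 2 statements merged into one kernel-verified Lean document; each statement's English description precedes it below -/
import Mathlib

section
/- Let x0(E) = a(e + cos E) and x1(E) = a√(1−e²)·sin E with a > 0, 0 ≤ e < 1, and φ(E) = arctan(x1(E)/x0(E)). Then on any interval where cos E + e > 0, r(E)·(dφ/dE) = a·√(1−e²), where r(E) = a(1 + e·cos E). -/
/-!
The angular velocity of a plane curve `(x, y)` is `(x y' - y x') / (x² + y²)`. On the ellipse
`x = a (e + cos E)`, `y = a √(1 - e²) sin E` the squared distance `x² + y²` is `r²` and the
cross product `x y' - y x'` is `a √(1 - e²) r`, so `r² φ' = a √(1 - e²) r`.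
-/

open Real

theorem HasDerivAt.arctan_div {f g : ℝ → ℝ} {f' g' t : ℝ} (hf : HasDerivAt f f' t)
    (hg : HasDerivAt g g' t) (hg0 : g t ≠ 0) :
    HasDerivAt (fun t => Real.arctan (f t / g t))
      ((g t * f' - f t * g') / (g t ^ 2 + f t ^ 2)) t := by
  have h := (hf.div hg hg0).arctan
  simp only [Pi.div_apply] at h
  convert h using 1
  field_simp

section Ellipse

variable (a e E : ℝ)

theorem ellipse_sq_add_sq (he : e ^ 2 ≤ 1) :
    (a * (e + cos E)) ^ 2 + (a * √(1 - e ^ 2) * sin E) ^ 2 = (a * (1 + e * cos E)) ^ 2 := by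
  have hs : √(1 - e ^ 2) ^ 2 = 1 - e ^ 2 := sq_sqrt (by linarith)
  linear_combination (a * sin E) ^ 2 * hs + a ^ 2 * (1 - e ^ 2) * sin_sq_add_cos_sq E

theorem ellipse_cross :
    a * (e + cos E) * (a * √(1 - e ^ 2) * cos E) - a * √(1 - e ^ 2) * sin E * (a * -sin E)
      = a * √(1 - e ^ 2) * (a * (1 + e * cos E)) := by
  linear_combination a ^ 2 * √(1 - e ^ 2) * sin_sq_add_cos_sq E

end Ellipse

theorem r_mul_deriv_phi_general (a e : ℝ) (ha : a > 0) (he1 : e < 1)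
    (x0 x1 r φ : ℝ → ℝ)
    (hx0 : ∀ E, x0 E = a * (e + Real.cos E))
    (hx1 : ∀ E, x1 E = a * Real.sqrt (1 - e ^ 2) * Real.sin E)
    (hr : ∀ E, r E = a * (1 + e * Real.cos E))
    (hφ : ∀ E, φ E = Real.arctan (x1 E / x0 E)) :
    ∀ E, Real.cos E + e > 0 → r E * deriv φ E = a * Real.sqrt (1 - e ^ 2) := by
  intro E hE
  have hφ_eq : φ = fun t => arctan (x1 t / x0 t) := funext hφ
  obtain rfl : x0 = fun E => a * (e + cos E) := funext hx0
  obtain rfl : x1 = fun E => a * √(1 - e ^ 2) * sin E := funext hx1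
  have he : e ^ 2 < 1 := by nlinarith [cos_le_one E]
  -- `1 + e cos E = (cos E + e) + (1 - e)(1 - cos E)`
  have hr_pos : 0 < r E := by
    rw [hr]
    nlinarith [mul_nonneg (sub_nonneg.2 he1.le) (sub_nonneg.2 (cos_le_one E))]
  have hφ' := HasDerivAt.arctan_div ((hasDerivAt_sin E).const_mul (a * √(1 - e ^ 2)))
    (((hasDerivAt_cos E).const_add e).const_mul a) (mul_pos ha (by linarith)).ne'
  rw [hφ_eq, hφ'.deriv, ellipse_cross, ellipse_sq_add_sq a e E he.le, ← hr]
  field_simp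

theorem r_mul_deriv_phi (a e : ℝ) (ha : a > 0) (he0 : 0 ≤ e) (he1 : e < 1)
    (x0 x1 r φ : ℝ → ℝ)
    (hx0 : ∀ E, x0 E = a * (e + Real.cos E))
    (hx1 : ∀ E, x1 E = a * Real.sqrt (1 - e ^ 2) * Real.sin E)
    (hr : ∀ E, r E = a * (1 + e * Real.cos E))
    (hφ : ∀ E, φ E = Real.arctan (x1 E / x0 E)) :
    ∀ E, Real.cos E + e > 0 → r E * deriv φ E = a * Real.sqrt (1 - e ^ 2) :=
  r_mul_deriv_phi_general a e ha he1 x0 x1 r φ hx0 hx1 hr hφ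
end

section
/- Kepler's second law: along the orbit x(E) = a(e+cos E) + i·a√(1−e²)·sin E with time defined by dt/dE = r/√(2h) where r = a(1+e·cos E), the areal velocity dΣ/dt = (1/2)·r²·(dφ/dt) is constant and equals a·√((h/2)(1−e²)). -/
/-!
Along a path `z` in the slit plane the polar angle is `Im (log z)`, so
`dφ/dE = Im (z'/z) = (z × z') / |z|²`. On the Kepler ellipse `|z| = r` and `z × z' = a √(1-e²) r`,
hence `dφ/dE = a √(1-e²) / r`, and every power of `r` cancels in `(1/2) r² (dφ/dE) (√(2h) / r)`.
-/

open Complex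

theorem HasDerivAt.arg_real {z : ℝ → ℂ} {z' : ℂ} {t : ℝ} (hz : HasDerivAt z z' t)
    (hslit : z t ∈ slitPlane) : HasDerivAt (fun s => (z s).arg) (z' / z t).im t := by
  have hlog := hz.clog_real hslit
  have him := imCLM.hasFDerivAt.comp_hasDerivAt t hlog
  simpa only [Function.comp_def, imCLM_apply, log_im] using him

noncomputable def keplerOrbit (a e E : ℝ) : ℂ :=
  a * (e + Real.cos E) + I * a * Real.sqrt (1 - e ^ 2) * Real.sin E

lemma keplerOrbit_re (a e E : ℝ) : (keplerOrbit a e E).re = a * (e + Real.cos E) := by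
  simp [keplerOrbit, cos_ofReal_re]

lemma keplerOrbit_im (a e E : ℝ) :
    (keplerOrbit a e E).im = a * Real.sqrt (1 - e ^ 2) * Real.sin E := by
  simp [keplerOrbit, sin_ofReal_re]

lemma hasDerivAt_keplerOrbit (a e E : ℝ) :
    HasDerivAt (keplerOrbit a e)
      (-a * Real.sin E + I * a * Real.sqrt (1 - e ^ 2) * Real.cos E) E := by
  have hcos := (Real.hasDerivAt_cos E).ofReal_comp
  have hsin := (Real.hasDerivAt_sin E).ofReal_comp
  unfold keplerOrbit
  refine (((hcos.const_add (e : ℂ)).const_mul (a : ℂ)).fun_add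
    (hsin.const_mul (I * a * Real.sqrt (1 - e ^ 2)))).congr_deriv ?_
  push_cast
  ring

lemma normSq_keplerOrbit {e : ℝ} (he : e ^ 2 ≤ 1) (a E : ℝ) :
    normSq (keplerOrbit a e E) = (a * (1 + e * Real.cos E)) ^ 2 := by
  rw [normSq_apply, keplerOrbit_re, keplerOrbit_im]
  have hq := Real.sq_sqrt (sub_nonneg.2 he)
  linear_combination (a ^ 2 * Real.sin E ^ 2) * hq + (a ^ 2 * (1 - e ^ 2)) * Real.sin_sq_add_cos_sq E

lemma keplerOrbit_radius_ne_zero {a e E : ℝ} (he : e ^ 2 ≤ 1)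
    (hslit : keplerOrbit a e E ∈ slitPlane) : a * (1 + e * Real.cos E) ≠ 0 := by
  have hpos := normSq_pos.2 (slitPlane_ne_zero hslit)
  rw [normSq_keplerOrbit he] at hpos
  exact pow_ne_zero_iff two_ne_zero |>.1 hpos.ne'

lemma hasDerivAt_arg_keplerOrbit {a e E : ℝ} (he : e ^ 2 ≤ 1)
    (hslit : keplerOrbit a e E ∈ slitPlane) :
    HasDerivAt (fun E => (keplerOrbit a e E).arg)
      (Real.sqrt (1 - e ^ 2) / (1 + e * Real.cos E)) E := by
  refine ((hasDerivAt_keplerOrbit a e E).arg_real hslit).congr_deriv ?_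
  have hr := keplerOrbit_radius_ne_zero he hslit
  have ha : a ≠ 0 := left_ne_zero_of_mul hr
  have hden : 1 + e * Real.cos E ≠ 0 := right_ne_zero_of_mul hr
  rw [div_im, normSq_keplerOrbit he, keplerOrbit_re, keplerOrbit_im]
  simp only [add_re, add_im, neg_re, neg_im, mul_re, mul_im, I_re, I_im, ofReal_re, ofReal_im]
  field_simp
  linear_combination a * Real.sqrt (1 - e ^ 2) * Real.sin_sq_add_cos_sq E

lemma sqrt_two_mul_eq_two_mul_sqrt_div_two (h : ℝ) :
    Real.sqrt (2 * h) = 2 * Real.sqrt (h / 2) := by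
  rw [show 2 * h = 2 ^ 2 * (h / 2) by ring, Real.sqrt_mul (by positivity),
    Real.sqrt_sq zero_le_two]

open Complex in
theorem keplers_second_law_general (a e h : ℝ) (ha : a > 0) (he0 : 0 ≤ e) (he1 : e < 1)
    (x : ℝ → ℂ) (r : ℝ → ℝ) (φ : ℝ → ℝ)
    (hx : ∀ E, x E = a * (e + Real.cos E) + I * a * Real.sqrt (1 - e ^ 2) * Real.sin E)
    (hr : ∀ E, r E = a * (1 + e * Real.cos E))
    (hφ : ∀ E, φ E = (x E).arg) :
    ∀ E, Real.cos E + e > 0 →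
      (1 / 2) * r E ^ 2 * (deriv φ E * (Real.sqrt (2 * h) / r E))
        = a * Real.sqrt ((h / 2) * (1 - e ^ 2)) := by
  intro E hE
  have he : e ^ 2 ≤ 1 := by nlinarith
  have hslit : keplerOrbit a e E ∈ slitPlane :=
    mem_slitPlane_iff.2 (Or.inl (by rw [keplerOrbit_re]; exact mul_pos ha (by linarith)))
  have hφ_eq : φ = fun E => (keplerOrbit a e E).arg := funext fun E => by rw [hφ, hx]; rfl
  have hdφ : deriv φ E = Real.sqrt (1 - e ^ 2) / (1 + e * Real.cos E) :=
    hφ_eq ▸ (hasDerivAt_arg_keplerOrbit he hslit).deriv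
  have hr0 := keplerOrbit_radius_ne_zero he hslit
  have hden := right_ne_zero_of_mul hr0
  rw [hdφ, hr, sqrt_two_mul_eq_two_mul_sqrt_div_two, Real.sqrt_mul' _ (sub_nonneg.2 he)]
  field_simp

open Complex in
/-- Kepler's second law: the areal velocity `dΣ/dt = (1/2) r² (dφ/dE)(dE/dt)` is the
constant `a √((h/2)(1−e²))`, where `dE/dt = √(2h)/r`. -/
theorem keplers_second_law (a e h : ℝ) (ha : a > 0) (he0 : 0 ≤ e) (he1 : e < 1) (hh : h > 0)
    (x : ℝ → ℂ) (r : ℝ → ℝ) (φ : ℝ → ℝ)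
    (hx : ∀ E, x E = a * (e + Real.cos E) + I * a * Real.sqrt (1 - e ^ 2) * Real.sin E)
    (hr : ∀ E, r E = a * (1 + e * Real.cos E))
    (hφ : ∀ E, φ E = (x E).arg) :
    ∀ E, Real.cos E + e > 0 →
      (1 / 2) * r E ^ 2 * (deriv φ E * (Real.sqrt (2 * h) / r E))
        = a * Real.sqrt ((h / 2) * (1 - e ^ 2)) :=
  keplers_second_law_general a e h ha he0 he1 x r φ hx hr hφ
end
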